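/- For integers n ≥ d ≥ 1, (d-1)! * S(n,d) = ∑_{1 ≤ j_1 < ... < j_{d-1} < n} 1 * 2^(j_{d-1}-j_{d-2}) * ... * (d-1)^(j_2-j_1) * d^(j_1 - 1), i.e., the sum over all strictly increasing sequences 1 ≤ j_1 < ... < j_{d-1} < n of 1 * 2^(j_{d-1}-j_{d-2}) * ... * d^(j_1 - 1) equals (d-1)! * S(n,d), where S(n,d) is the Stirling number of the second kind. -/

import Mathlib

open scoped Classical

/-- Stirling numbers of the second kind. -/
def stirling2 : ℕ → ℕ → ℕ
  | 0, 0 => 1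
  | 0, _ + 1 => 0
  | _ + 1, 0 => 0
  | n + 1, d + 1 => stirling2 n d + (d + 1) * stirling2 n (d + 1)

/-- Sequences `0 = j 0 < j 1 < ... < j d = n`. -/
noncomputable def fullSeqs (d n : ℕ) : Finset (Fin (d + 1) → ℕ) :=
  (Fintype.piFinset fun _ => Finset.range (n + 1)).filter
    (fun j => j 0 = 0 ∧ StrictMono j ∧ j (Fin.last d) = n)

/-- Recursive form of the sum over compositions. -/
def Cfun : ℕ → ℕ → ℕ
  | 0, n => if n = 0 then 1 else 0
  | d + 1, n => ∑ k ∈ Finset.Icc 1 n, (d + 1) ^ k * Cfun d (n - k)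

lemma sum_Icc_one {M : Type*} [AddCommMonoid M] (n : ℕ) (f : ℕ → M) :
    ∑ k ∈ Finset.Icc 1 n, f k = ∑ i ∈ Finset.range n, f (i + 1) := by
  refine Finset.sum_nbij' (fun k => k - 1) (fun i => i + 1) ?_ ?_ ?_ ?_ ?_ <;>
    simp only [Finset.mem_Icc, Finset.mem_range]
  · intro a ha; omega
  · intro a ha; omega
  · intro a ha; omega
  · intro a ha; omega
  · intro a ha; exact congrArg f (by omega)

lemma Cfun_eq (d n : ℕ) : Cfun d n = d.factorial * stirling2 n d := by
  induction d generalizing n with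
  | zero =>
    cases n <;> simp [Cfun, stirling2]
  | succ d ih =>
    induction n with
    | zero => simp [Cfun, stirling2]
    | succ n ihn =>
      rw [Cfun, sum_Icc_one]
      rw [Finset.sum_range_succ']
      have h1 : ∀ i, (d + 1) ^ (i + 1 + 1) * Cfun d (n + 1 - (i + 1 + 1)) =
          (d + 1) * ((d + 1) ^ (i + 1) * Cfun d (n - (i + 1))) := by
        intro i
        have : n + 1 - (i + 1 + 1) = n - (i + 1) := by omega
        rw [this, pow_succ]; ring
      rw [Finset.sum_congr rfl fun i _ => h1 i, ← Finset.mul_sum]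
      have h2 : ∑ i ∈ Finset.range n, (d + 1) ^ (i + 1) * Cfun d (n - (i + 1)) =
          Cfun (d + 1) n := by
        rw [Cfun, sum_Icc_one]
      rw [h2, ihn, ih]
      show (d + 1) * ((d + 1).factorial * stirling2 n (d + 1)) +
          (d + 1) ^ (0 + 1) * (d.factorial * stirling2 (n + 1 - (0 + 1)) d) = _
      have h3 : stirling2 (n + 1) (d + 1) = stirling2 n d + (d + 1) * stirling2 n (d + 1) := rfl
      rw [h3, Nat.factorial_succ]
      simp only [pow_one, Nat.add_sub_cancel]
      ring

lemma mem_fullSeqs {d n : ℕ} {j : Fin (d + 1) → ℕ} :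
    j ∈ fullSeqs d n ↔ (∀ i, j i ≤ n) ∧ j 0 = 0 ∧ StrictMono j ∧ j (Fin.last d) = n := by
  simp [fullSeqs, Fintype.mem_piFinset, Nat.lt_succ_iff]

lemma sumT (d n : ℕ) :
    ∑ j ∈ fullSeqs d n,
      ∏ r : Fin d, ((d : ℕ) - (r : ℕ)) ^ (j r.succ - j r.castSucc) = Cfun d n := by
  induction d generalizing n with
  | zero =>
    rcases eq_or_ne n 0 with rfl | hn
    · have hs : fullSeqs 0 0 = {fun _ => 0} := by
        ext j
        rw [mem_fullSeqs, Finset.mem_singleton]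
        constructor
        · rintro ⟨-, h0, -, -⟩
          funext i
          have hi : i = 0 := Fin.fin_one_eq_zero i
          rw [hi, h0]
        · rintro rfl
          refine ⟨fun _ => le_refl _, rfl, ?_, rfl⟩
          intro a b hab
          rw [Fin.fin_one_eq_zero a, Fin.fin_one_eq_zero b] at hab
          exact absurd hab (lt_irrefl _)
      simp [hs, Cfun]
    · have hs : fullSeqs 0 n = ∅ := by
        ext j
        rw [mem_fullSeqs]
        simp only [Finset.notMem_empty, iff_false]
        rintro ⟨-, h0, -, hl⟩
        exact hn (by rw [← hl]; exact (congrArg j (Fin.fin_one_eq_zero _)).trans h0)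
      simp [hs, Cfun, hn]
  | succ d ih =>
    rw [Cfun]
    have hstep : ∀ k ∈ Finset.Icc 1 n, (d + 1) ^ k * Cfun d (n - k) =
        ∑ j ∈ fullSeqs d (n - k),
          (d + 1) ^ k * ∏ r : Fin d, ((d : ℕ) - (r : ℕ)) ^ (j r.succ - j r.castSucc) := by
      intro k _
      rw [← ih, Finset.mul_sum]
    rw [Finset.sum_congr rfl hstep,
      Finset.sum_sigma' (Finset.Icc 1 n) (fun k => fullSeqs d (n - k))
        (fun k j => (d + 1) ^ k *
          ∏ r : Fin d, ((d : ℕ) - (r : ℕ)) ^ (j r.succ - j r.castSucc))]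
    symm
    refine Finset.sum_nbij' (fun p => Fin.cons 0 (fun i => p.2 i + p.1))
      (fun j => (⟨j 1, fun i => j i.succ - j 1⟩ : Σ _k : ℕ, Fin (d + 1) → ℕ))
      ?_ ?_ ?_ ?_ ?_
    · -- sigma → fullSeqs
      rintro ⟨k, j'⟩ hp
      rw [Finset.mem_sigma] at hp
      obtain ⟨hk, hj'⟩ := hp
      rw [Finset.mem_Icc] at hk
      rw [mem_fullSeqs] at hj' ⊢
      obtain ⟨hle, h0, hsm, hlast⟩ := hj'
      dsimp only at *
      refine ⟨?_, ?_, ?_, ?_⟩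
      · intro i
        induction i using Fin.cases with
        | zero => simp
        | succ i => simp only [Fin.cons_succ]; have := hle i; omega
      · simp
      · rw [Fin.strictMono_iff_lt_succ]
        intro i
        induction i using Fin.cases with
        | zero =>
          rw [Fin.castSucc_zero, Fin.cons_zero, Fin.cons_succ, h0]
          omega
        | succ i =>
          rw [← Fin.succ_castSucc, Fin.cons_succ, Fin.cons_succ]
          have := hsm (Fin.castSucc_lt_succ : Fin.castSucc i < i.succ)
          omega
      · rw [← Fin.succ_last, Fin.cons_succ, hlast]
        omega
    · -- fullSeqs → sigma
      intro j hj
      rw [mem_fullSeqs] at hj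
      obtain ⟨hle, h0, hsm, hlast⟩ := hj
      have h01 : (0 : Fin (d + 2)) < 1 := by simp [Fin.lt_def]
      have hj1 : 1 ≤ j 1 := by have := hsm h01; omega
      have hj1n : j 1 ≤ n := hle 1
      have hmono : ∀ i : Fin (d + 1), j 1 ≤ j i.succ := fun i =>
        hsm.monotone (by simp [Fin.le_def])
      rw [Finset.mem_sigma]
      refine ⟨Finset.mem_Icc.mpr ⟨hj1, hj1n⟩, ?_⟩
      rw [mem_fullSeqs]
      dsimp only
      refine ⟨fun i => by have := hle i.succ; omega, ?_, ?_, ?_⟩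
      · rw [Fin.succ_zero_eq_one]; omega
      · intro a b hab
        show j a.succ - j 1 < j b.succ - j 1
        have := hsm (Fin.succ_lt_succ_iff.mpr hab)
        have := hmono a
        omega
      · rw [Fin.succ_last, hlast]
    · -- left inverse (on sigma)
      rintro ⟨k, j'⟩ hp
      rw [Finset.mem_sigma] at hp
      obtain ⟨hk, hj'⟩ := hp
      rw [mem_fullSeqs] at hj'
      obtain ⟨hle, h0, hsm, hlast⟩ := hj'
      dsimp only at *
      have hc1 : (Fin.cons (0 : ℕ) (fun i => j' i + k) : Fin (d + 1 + 1) → ℕ) 1 = k := by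
        rw [← Fin.succ_zero_eq_one, Fin.cons_succ, h0]
        omega
      refine Sigma.ext ?_ ?_
      · simpa using hc1
      · refine heq_of_eq ?_
        funext i
        dsimp only
        rw [Fin.cons_succ, hc1]
        omega
    · -- right inverse (on fullSeqs)
      intro j hj
      rw [mem_fullSeqs] at hj
      obtain ⟨hle, h0, hsm, hlast⟩ := hj
      have hmono : ∀ i : Fin (d + 1), j 1 ≤ j i.succ := fun i =>
        hsm.monotone (by simp [Fin.le_def])
      dsimp only
      funext i
      induction i using Fin.cases with
      | zero => simp [h0]
      | succ i =>
        rw [Fin.cons_succ]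
        have := hmono i
        omega
    · -- terms agree
      rintro ⟨k, j'⟩ hp
      rw [Finset.mem_sigma] at hp
      obtain ⟨hk, hj'⟩ := hp
      rw [mem_fullSeqs] at hj'
      obtain ⟨hle, h0, hsm, hlast⟩ := hj'
      dsimp only at *
      rw [Fin.prod_univ_succ]
      have hf0 : ((d + 1 : ℕ) - ((0 : Fin (d + 1)) : ℕ)) ^
          ((Fin.cons (0 : ℕ) (fun i => j' i + k) : Fin (d + 1 + 1) → ℕ) (Fin.succ 0) -
            (Fin.cons (0 : ℕ) (fun i => j' i + k) : Fin (d + 1 + 1) → ℕ)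
              (Fin.castSucc 0)) = (d + 1) ^ k := by
        rw [Fin.cons_succ, Fin.castSucc_zero, Fin.cons_zero, h0]
        norm_num
      rw [hf0]
      congr 1
      apply Finset.prod_congr rfl
      intro r _
      have hbase : ((d + 1 : ℕ) - ((r.succ : Fin (d + 1)) : ℕ)) = (d : ℕ) - (r : ℕ) := by
        simp [Fin.val_succ]
      rw [hbase]
      congr 1
      rw [← Fin.succ_castSucc, Fin.cons_succ, Fin.cons_succ]
      omega

/-- `∑ 1·2^(j_{d-1}-j_{d-2})···(d-1)^(j_2-j_1)·d^(j_1-1) = (d-1)!·S(n,d)`: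
the `r`-th factor (base `d - r`) has exponent `j_{r+1} - j_r`, with the
exponent of the `r = 0` factor (base `d`) reduced by `1`. -/
theorem stmt8 (d n : ℕ) (hd : 1 ≤ d) (hdn : d ≤ n) :
    ∑ j ∈ fullSeqs d n,
        ∏ r : Fin d, ((d : ℕ) - (r : ℕ)) ^
          (j r.succ - j r.castSucc - if (r : ℕ) = 0 then 1 else 0) =
      (d - 1).factorial * stirling2 n d := by
  obtain ⟨d', rfl⟩ : ∃ d', d = d' + 1 := ⟨d - 1, by omega⟩
  have key : (∑ j ∈ fullSeqs (d' + 1) n,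
      ∏ r : Fin (d' + 1), ((d' + 1 : ℕ) - (r : ℕ)) ^
        (j r.succ - j r.castSucc - if (r : ℕ) = 0 then 1 else 0)) * (d' + 1) =
      (d' + 1).factorial * stirling2 n (d' + 1) := by
    rw [← Cfun_eq, ← sumT, Finset.sum_mul]
    apply Finset.sum_congr rfl
    intro j hj
    rw [mem_fullSeqs] at hj
    obtain ⟨hle, h0, hsm, hlast⟩ := hj
    have h01 : (0 : Fin (d' + 2)) < 1 := by simp [Fin.lt_def]
    have hj1 : 1 ≤ j 1 := by have := hsm h01; omega
    rw [Fin.prod_univ_succ, Fin.prod_univ_succ]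
    have hrest : ∀ r : Fin d', ((d' + 1 : ℕ) - ((r.succ : Fin (d' + 1)) : ℕ)) ^
        (j r.succ.succ - j r.succ.castSucc -
          if ((r.succ : Fin (d' + 1)) : ℕ) = 0 then 1 else 0) =
        ((d' + 1 : ℕ) - ((r.succ : Fin (d' + 1)) : ℕ)) ^
          (j r.succ.succ - j r.succ.castSucc) := by
      intro r
      rw [if_neg (by simp [Fin.val_succ]), Nat.sub_zero]
    rw [Finset.prod_congr rfl fun r _ => hrest r, mul_right_comm]
    congr 1
    simp only [Fin.succ_zero_eq_one, Fin.castSucc_zero, h0, Fin.val_zero, Nat.sub_zero,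
      if_true, reduceIte]
    rw [← pow_succ]
    congr 1
    omega
  have hcancel : (d' + 1) * (d' + 1 - 1).factorial * stirling2 n (d' + 1) =
      (d' + 1).factorial * stirling2 n (d' + 1) := by
    simp [Nat.factorial_succ]
  have := key
  rw [← hcancel] at this
  have h2 : (∑ j ∈ fullSeqs (d' + 1) n,
      ∏ r : Fin (d' + 1), ((d' + 1 : ℕ) - (r : ℕ)) ^
        (j r.succ - j r.castSucc - if (r : ℕ) = 0 then 1 else 0)) * (d' + 1) =
      ((d' + 1 - 1).factorial * stirling2 n (d' + 1)) * (d' + 1) := by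
    rw [this]; ring
  exact Nat.eq_of_mul_eq_mul_right d'.succ_pos h2
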